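/- In a labelled CFG, suppose node v has exactly one successor v', that Def(v) = {x}, and that Use(v) = F (v models an assignment x := E whose right-hand side has free variables F). If v ∈ Q then rv(Q,v) = (rv(Q,v') \ {x}) ∪ F. -/

import Mathlib

namespace Slicing

/-- A path is a nonempty list of nodes, consecutive ones related by `succ`,
starting at `v` and ending at `v'`. -/
def IsPath {V : Type} (succ : V → V → Prop) (p : List V) (v v' : V) : Prop :=
  p.Chain' succ ∧ p.head? = some v ∧ p.getLast? = some v'

/-- A control-flow graph: an edge relation and an `End` node with no successors,
reachable from every node. -/
structure CFG (V : Type) where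
  succ : V → V → Prop
  End : V
  end_no_succ : ∀ w, ¬ succ End w
  reach_end : ∀ v, ∃ p, IsPath succ p v End

variable {V : Type}

/-- `v1` postdominates `v`. -/
def PD (G : CFG V) (v v1 : V) : Prop :=
  ∀ p, IsPath G.succ p v G.End → v1 ∈ p

/-- `v1` is a proper postdominator of `v`. -/
def ProperPD (G : CFG V) (v v1 : V) : Prop :=
  PD G v v1 ∧ v1 ≠ v

/-- `v1` is a first proper postdominator of `v`: every path from `v` to any other
proper postdominator of `v` contains `v1`. -/
def IsFPPD (G : CFG V) (v v1 : V) : Prop :=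
  ProperPD G v v1 ∧
    ∀ v2, ProperPD G v v2 → v2 ≠ v1 → ∀ p, IsPath G.succ p v v2 → v1 ∈ p

/-- Maximum number of edges of an acyclic path from `v` to `v'`. -/
noncomputable def LAP (G : CFG V) (v v' : V) : ℕ :=
  sSup {n | ∃ p, IsPath G.succ p v v' ∧ p.Nodup ∧ p.length = n + 1}

/-- A node is cycle-inducing if, with `v'` its first proper postdominator,
some successor `vi` of `v` satisfies `LAP vi v' ≥ LAP v v'`. -/
def CycleInducing (G : CFG V) (v : V) : Prop :=
  ∃ v', IsFPPD G v v' ∧ ∃ vi, G.succ v vi ∧ LAP G v v' ≤ LAP G vi v'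

/-- `v` stays outside `Q` until `v'`: every path from `v` to `v'` in which `v'`
occurs only at the final position contains no node of `Q` except possibly `v'`. -/
def StaysOutside (G : CFG V) (Q : Set V) (v v' : V) : Prop :=
  ∀ p, IsPath G.succ p v v' → v' ∉ p.dropLast → ∀ w ∈ p, w ∈ Q → w = v'

/-- `v2` is data dependent on `v1`. -/
def DataDep {Var : Type} (G : CFG V) (Def Use : V → Set Var) (v1 v2 : V) : Prop :=
  ∃ x, x ∈ Use v2 ∧ x ∈ Def v1 ∧
    ∃ p, IsPath G.succ p v1 v2 ∧ 2 ≤ p.length ∧ ∀ w ∈ p.tail.dropLast, x ∉ Def w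

/-- `Q` is closed under data dependence. -/
def ClosedDD {Var : Type} (G : CFG V) (Def Use : V → Set Var) (Q : Set V) : Prop :=
  ∀ v1 v2, v2 ∈ Q → DataDep G Def Use v1 v2 → v1 ∈ Q

/-- The `Q`-relevant variables at `v`. -/
def rv {Var : Type} (G : CFG V) (Def Use : V → Set Var) (Q : Set V) (v : V) : Set Var :=
  {x | ∃ v' ∈ Q, x ∈ Use v' ∧
    ∃ p, IsPath G.succ p v v' ∧ p.Nodup ∧ ∀ w ∈ p, w ≠ v' → x ∉ Def w}

/-- `v'` is a next visible in `Q` of `v`. -/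
def IsNextVisible (G : CFG V) (Q : Set V) (v v' : V) : Prop :=
  (v' ∈ Q ∨ v' = G.End) ∧
    ∀ u, (u ∈ Q ∨ u = G.End) → ∀ p, IsPath G.succ p v u → v' ∈ p

/-- `Q` provides next visibles. -/
def ProvidesNextVisibles (G : CFG V) (Q : Set V) : Prop :=
  ∀ v, ∃ v', IsNextVisible G Q v v'

/-- A weak slice set provides next visibles and is closed under data dependence. -/
def WeakSliceSet {Var : Type} (G : CFG V) (Def Use : V → Set Var) (Q : Set V) : Prop :=
  ProvidesNextVisibles G Q ∧ ClosedDD G Def Use Q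

end Slicing

/-!
An acyclic path from an assignment node `v` is either `[v]` itself, which contributes `Use v`, or
`v` followed by an acyclic path from its only successor `v'` that avoids `v`, which contributes the
variables relevant at `v'` that `v` does not define. Conversely, an acyclic path from `v'` either
avoids `v`, and can be prefixed with `v`, or passes through `v`, and can be cut there.
-/

namespace Slicing

section Paths

variable {V : Type} {succ : V → V → Prop} {p t : List V} {u v w b : V}

theorem isPath_singleton (v : V) : IsPath succ [v] v v :=
  ⟨List.isChain_singleton v, rfl, rfl⟩

theorem IsPath.exists_eq_cons (h : IsPath succ p u w) : ∃ q, p = u :: q := by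
  obtain ⟨-, hhead, -⟩ := h
  cases p with
  | nil => simp at hhead
  | cons a q => exact ⟨q, by simpa using hhead⟩

theorem IsPath.end_mem (h : IsPath succ p u w) : w ∈ p :=
  List.mem_of_getLast? h.2.2

theorem IsPath.eq_of_singleton (h : IsPath succ [u] u w) : u = w := by
  simpa using h.2.2

theorem IsPath.cons (h : IsPath succ p v w) (huv : succ u v) : IsPath succ (u :: p) u w := by
  obtain ⟨q, rfl⟩ := h.exists_eq_cons
  obtain ⟨hchain, -, hlast⟩ := h
  exact ⟨List.isChain_cons_cons.mpr ⟨huv, hchain⟩, rfl, by rw [List.getLast?_cons_cons, hlast]⟩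

theorem IsPath.of_cons (h : IsPath succ (u :: b :: t) u w) :
    succ u b ∧ IsPath succ (b :: t) b w := by
  obtain ⟨hchain, -, hlast⟩ := h
  obtain ⟨hub, hchain⟩ := List.isChain_cons_cons.mp hchain
  exact ⟨hub, hchain, rfl, by rwa [List.getLast?_cons_cons] at hlast⟩

theorem IsPath.exists_suffix_of_mem (h : IsPath succ p u w) (hv : v ∈ p) :
    ∃ l, IsPath succ (v :: l) v w ∧ v :: l <:+ p := by
  obtain ⟨l₁, l, rfl⟩ := List.append_of_mem hv
  have hsuffix : v :: l <:+ l₁ ++ v :: l := ⟨l₁, rfl⟩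
  obtain ⟨hchain, -, hlast⟩ := h
  exact ⟨l, ⟨hchain.suffix hsuffix, rfl, by rwa [List.getLast?_append_cons] at hlast⟩, hsuffix⟩

end Paths

section Relevant

variable {V Var : Type} {G : CFG V} {Def Use : V → Set Var} {Q : Set V} {v v' : V}

theorem use_subset_rv (hv : v ∈ Q) : Use v ⊆ rv G Def Use Q v :=
  fun _ hy => ⟨v, hv, hy, [v], isPath_singleton v, List.nodup_singleton v,
    fun _ hw hne => absurd (List.mem_singleton.mp hw) hne⟩

theorem rv_diff_def_subset_rv (hsucc : G.succ v v') :
    rv G Def Use Q v' \ Def v ⊆ rv G Def Use Q v := by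
  rintro y ⟨⟨u, hu, hyu, p, hp, hnodup, hkill⟩, hyv⟩
  by_cases hvp : v ∈ p
  · obtain ⟨l, hl, hsuffix⟩ := hp.exists_suffix_of_mem hvp
    exact ⟨u, hu, hyu, v :: l, hl, hnodup.sublist hsuffix.sublist,
      fun w hw => hkill w (hsuffix.subset hw)⟩
  · refine ⟨u, hu, hyu, v :: p, hp.cons hsucc, List.nodup_cons.mpr ⟨hvp, hnodup⟩, ?_⟩
    rintro w (_ | ⟨_, hw⟩)
    · exact fun _ => hyv
    · exact hkill w hw

theorem rv_subset_diff_def_union_use (huniq : ∀ w, G.succ v w → w = v') :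
    rv G Def Use Q v ⊆ (rv G Def Use Q v' \ Def v) ∪ Use v := by
  rintro y ⟨u, hu, hyu, p, hp, hnodup, hkill⟩
  obtain ⟨q, rfl⟩ := hp.exists_eq_cons
  cases q with
  | nil => exact Or.inr (hp.eq_of_singleton ▸ hyu)
  | cons b t =>
    obtain ⟨hvb, hbt⟩ := hp.of_cons
    obtain rfl := huniq b hvb
    have hvu : v ≠ u := fun h => (List.nodup_cons.mp hnodup).1 (h ▸ hbt.end_mem)
    exact Or.inl ⟨⟨u, hu, hyu, b :: t, hbt, hnodup.of_cons,
      fun w hw => hkill w (List.mem_cons_of_mem v hw)⟩, hkill v List.mem_cons_self hvu⟩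

theorem rv_eq_diff_def_union_use (hQ : v ∈ Q) (hsucc : G.succ v v')
    (huniq : ∀ w, G.succ v w → w = v') :
    rv G Def Use Q v = (rv G Def Use Q v' \ Def v) ∪ Use v :=
  (rv_subset_diff_def_union_use huniq).antisymm
    (Set.union_subset (rv_diff_def_subset_rv hsucc) (use_subset_rv hQ))

end Relevant

theorem rv_assign_general {V Var : Type} (G : CFG V)
    (Def Use : V → Set Var) (Q : Set V) (v v' : V) (x : Var) (F : Set Var)
    (hsucc : G.succ v v') (huniq : ∀ w, G.succ v w → w = v')
    (hdef : Def v = {x}) (huse : Use v = F) (hQ : v ∈ Q) :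
    rv G Def Use Q v = (rv G Def Use Q v' \ {x}) ∪ F := by
  rw [rv_eq_diff_def_union_use hQ hsucc huniq, hdef, huse]

/-- For an assignment node `v ∈ Q` (unique successor `v'`, `Def v = {x}`, `Use v = F`),
`rv(Q,v) = (rv(Q,v') \ {x}) ∪ F`. -/
theorem rv_assign {V Var : Type} [Fintype V] (G : CFG V)
    (Def Use : V → Set Var) (Q : Set V) (v v' : V) (x : Var) (F : Set Var)
    (hsucc : G.succ v v') (huniq : ∀ w, G.succ v w → w = v')
    (hdef : Def v = {x}) (huse : Use v = F) (hQ : v ∈ Q) :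
    rv G Def Use Q v = (rv G Def Use Q v' \ {x}) ∪ F :=
  rv_assign_general G Def Use Q v v' x F hsucc huniq hdef huse hQ

end Slicing
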